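/- arXiv:2206.02567 — 4 statements merged into one kernel-verified Lean document; each statement's English description precedes it below -/
import Mathlib

section
/- The map ϱ satisfies the triangle inequality: for all α, β, γ ∈ Ĩ, ϱ(α, β) + ϱ(β, γ) ≥ ϱ(α, γ). -/
/-!
On `Ĩ` accuracies lie in `[0, 1]`, so `ϱ(α, γ) ≤ (1 + |s(α) - s(γ)|)/3` always, while
`ϱ(α, β) ≥ |s(α) - s(β)|/3` with an extra `1/3` once the scores differ. Hence, unless all
three scores agree (where `ϱ` is `|h(α) - h(γ)|/3`), the triangle inequality for the scores
plus that extra `1/3` gives the claim.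
-/

/-- The set of intuitionistic fuzzy values (IFVs). -/
def Itilde : Set (ℝ × ℝ) :=
  {p | 0 ≤ p.1 ∧ p.1 ≤ 1 ∧ 0 ≤ p.2 ∧ p.2 ≤ 1 ∧ p.1 + p.2 ≤ 1}

/-- Score degree `s(α) = μ_α - ν_α`. -/
def score (p : ℝ × ℝ) : ℝ := p.1 - p.2

/-- Accuracy degree `h(α) = μ_α + ν_α`. -/
def accuracy (p : ℝ × ℝ) : ℝ := p.1 + p.2

/-- The distance measure `ϱ` of Wu et al. -/
noncomputable def vrho (a b : ℝ × ℝ) : ℝ :=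
  if score a ≠ score b then (1 + |score a - score b|) / 3
  else |accuracy a - accuracy b| / 3

lemma accuracy_mem_Icc {p : ℝ × ℝ} (hp : p ∈ Itilde) : accuracy p ∈ Set.Icc 0 1 := by
  obtain ⟨h₁, -, h₂, -, h₃⟩ := hp
  exact ⟨add_nonneg h₁ h₂, h₃⟩

lemma abs_accuracy_sub_le_one {a b : ℝ × ℝ} (ha : a ∈ Itilde) (hb : b ∈ Itilde) :
    |accuracy a - accuracy b| ≤ 1 := by
  obtain ⟨ha₀, ha₁⟩ := accuracy_mem_Icc ha
  obtain ⟨hb₀, hb₁⟩ := accuracy_mem_Icc hb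
  rw [abs_sub_le_iff]
  constructor <;> linarith

lemma vrho_of_score_ne {a b : ℝ × ℝ} (h : score a ≠ score b) :
    vrho a b = (1 + |score a - score b|) / 3 :=
  if_pos h

lemma vrho_of_score_eq {a b : ℝ × ℝ} (h : score a = score b) :
    vrho a b = |accuracy a - accuracy b| / 3 :=
  if_neg (not_not_intro h)

lemma abs_score_sub_div_three_le_vrho (a b : ℝ × ℝ) : |score a - score b| / 3 ≤ vrho a b := by
  by_cases h : score a = score b
  · rw [vrho_of_score_eq h, h, sub_self, abs_zero, zero_div]
    positivity
  · rw [vrho_of_score_ne h]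
    linarith

lemma vrho_le_one_add_abs_score_sub {a b : ℝ × ℝ} (ha : a ∈ Itilde) (hb : b ∈ Itilde) :
    vrho a b ≤ (1 + |score a - score b|) / 3 := by
  by_cases h : score a = score b
  · rw [vrho_of_score_eq h]
    linarith [abs_accuracy_sub_le_one ha hb, abs_nonneg (score a - score b)]
  · rw [vrho_of_score_ne h]

theorem vrho_triangle_general (a b c : ℝ × ℝ)
    (ha : a ∈ Itilde) (hc : c ∈ Itilde) :
    vrho a b + vrho b c ≥ vrho a c := by
  by_cases hscores : score a = score b ∧ score b = score c
  · obtain ⟨hab, hbc⟩ := hscores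
    rw [vrho_of_score_eq hab, vrho_of_score_eq hbc, vrho_of_score_eq (hab.trans hbc)]
    linarith [abs_sub_le (accuracy a) (accuracy b) (accuracy c)]
  · have hsum : (1 + |score a - score b| + |score b - score c|) / 3 ≤ vrho a b + vrho b c := by
      rcases not_and_or.mp hscores with hab | hbc
      · rw [vrho_of_score_ne hab]
        linarith [abs_score_sub_div_three_le_vrho b c]
      · rw [vrho_of_score_ne hbc]
        linarith [abs_score_sub_div_three_le_vrho a b]
    linarith [vrho_le_one_add_abs_score_sub ha hc, abs_sub_le (score a) (score b) (score c)]

/-- The triangle inequality for `ϱ`: for all `α, β, γ ∈ Ĩ`,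
`ϱ(α, β) + ϱ(β, γ) ≥ ϱ(α, γ)`. -/
theorem vrho_triangle (a b c : ℝ × ℝ)
    (ha : a ∈ Itilde) (hb : b ∈ Itilde) (hc : c ∈ Itilde) :
    vrho a b + vrho b c ≥ vrho a c :=
  vrho_triangle_general a b c ha hc
end

section
/- For every real parameter λ ≥ 1, the map ϱ̃^(λ) satisfies the triangle inequality: for all α, β, γ ∈ Ĩ, ϱ̃^(λ)(α, β) + ϱ̃^(λ)(β, γ) ≥ ϱ̃^(λ)(α, γ). -/
/-- The similarity function `L(α) = (1 - ν_α)/((1 - μ_α) + (1 - ν_α))`. -/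
noncomputable def Lfun (p : ℝ × ℝ) : ℝ := (1 - p.2) / ((1 - p.1) + (1 - p.2))

/-- The parametric distance measure `ϱ̃^(λ)`. -/
noncomputable def vrhoT (l : ℝ) (a b : ℝ × ℝ) : ℝ :=
  if Lfun a ≠ Lfun b then (1 + l * |Lfun a - Lfun b|) / (1 + l)
  else |accuracy a - accuracy b| / (1 + l)

lemma Lfun_mem {p : ℝ × ℝ} (hp : p ∈ Itilde) : 0 ≤ Lfun p ∧ Lfun p ≤ 1 := by
  obtain ⟨h1, h2, h3, h4, h5⟩ := hp
  have hd : (0:ℝ) < (1 - p.1) + (1 - p.2) := by linarith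
  refine ⟨div_nonneg (by linarith) hd.le, ?_⟩
  rw [Lfun, div_le_one hd]; linarith

lemma acc_mem {p : ℝ × ℝ} (hp : p ∈ Itilde) : 0 ≤ accuracy p ∧ accuracy p ≤ 1 := by
  obtain ⟨h1, h2, h3, h4, h5⟩ := hp
  exact ⟨by simp [accuracy]; linarith, h5⟩

/-- For `l ≥ 1`, `ϱ̃ᶫ` satisfies the triangle inequality on the IFV space. -/
theorem vrhoT_triangle (l : ℝ) (hl : 1 ≤ l) (a b c : ℝ × ℝ)
    (ha : a ∈ Itilde) (hb : b ∈ Itilde) (hc : c ∈ Itilde) :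
    vrhoT l a b + vrhoT l b c ≥ vrhoT l a c := by
  have hl0 : (0:ℝ) < 1 + l := by linarith
  obtain ⟨La0, La1⟩ := Lfun_mem ha
  obtain ⟨Lb0, Lb1⟩ := Lfun_mem hb
  obtain ⟨Lc0, Lc1⟩ := Lfun_mem hc
  obtain ⟨aa0, aa1⟩ := acc_mem ha
  obtain ⟨ab0, ab1⟩ := acc_mem hb
  obtain ⟨ac0, ac1⟩ := acc_mem hc
  have habs : ∀ x y : ℝ, 0 ≤ x → x ≤ 1 → 0 ≤ y → y ≤ 1 → |x - y| ≤ 1 := by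
    intro x y _ _ _ _
    rw [abs_le]; constructor <;> linarith
  have tri : |Lfun a - Lfun c| ≤ |Lfun a - Lfun b| + |Lfun b - Lfun c| :=
    abs_sub_le _ _ _
  have triacc : |accuracy a - accuracy c| ≤
      |accuracy a - accuracy b| + |accuracy b - accuracy c| := abs_sub_le _ _ _
  by_cases hab : Lfun a = Lfun b <;> by_cases hbc : Lfun b = Lfun c <;>
      by_cases hac : Lfun a = Lfun c
  -- case 1: all equal
  · rw [vrhoT, vrhoT, vrhoT, if_neg (not_not_intro hab), if_neg (not_not_intro hbc),
      if_neg (not_not_intro hac), ge_iff_le, ← add_div,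
      div_le_div_iff_of_pos_right hl0]
    linarith
  · exact absurd (hab.trans hbc) hac
  -- case: hab eq, hbc ne, hac eq
  · rw [vrhoT, vrhoT, vrhoT, if_neg (not_not_intro hab), if_pos hbc,
      if_neg (not_not_intro hac), ge_iff_le, ← add_div,
      div_le_div_iff_of_pos_right hl0]
    have h1 := habs _ _ aa0 aa1 ac0 ac1
    have h3 : 0 ≤ l * |Lfun b - Lfun c| := by positivity
    have h4 : 0 ≤ |accuracy a - accuracy b| := abs_nonneg _
    linarith
  -- case: hab eq, hbc ne, hac ne
  · rw [vrhoT, vrhoT, vrhoT, if_neg (not_not_intro hab), if_pos hbc, if_pos hac,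
      ge_iff_le, ← add_div, div_le_div_iff_of_pos_right hl0]
    rw [hab]
    have h4 : 0 ≤ |accuracy a - accuracy b| := abs_nonneg _
    linarith
  · exact absurd (hac.trans hbc.symm) hab
  -- case: hab ne, hbc eq, hac ne
  · rw [vrhoT, vrhoT, vrhoT, if_pos hab, if_neg (not_not_intro hbc), if_pos hac,
      ge_iff_le, ← add_div, div_le_div_iff_of_pos_right hl0]
    rw [hbc]
    have h4 : 0 ≤ |accuracy b - accuracy c| := abs_nonneg _
    linarith
  -- case: hab ne, hbc ne, hac eq
  · rw [vrhoT, vrhoT, vrhoT, if_pos hab, if_pos hbc, if_neg (not_not_intro hac),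
      ge_iff_le, ← add_div, div_le_div_iff_of_pos_right hl0]
    have h1 := habs _ _ aa0 aa1 ac0 ac1
    have h3 : 0 ≤ l * |Lfun a - Lfun b| := by positivity
    have h4 : 0 ≤ l * |Lfun b - Lfun c| := by positivity
    linarith
  -- case: all ne
  · rw [vrhoT, vrhoT, vrhoT, if_pos hab, if_pos hbc, if_pos hac,
      ge_iff_le, ← add_div, div_le_div_iff_of_pos_right hl0]
    have h3 : l * |Lfun a - Lfun c| ≤ l * (|Lfun a - Lfun b| + |Lfun b - Lfun c|) :=
      mul_le_mul_of_nonneg_left tri (by linarith)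
    linarith
end

section
/- Let (A, B) be a separating pair of continuous aggregation functions on [0,1]². Then the map ϱ_{A,B} is admissible with the linear order ≤_{A,B}: for all α, β, γ ∈ Ĩ with α ≤_{A,B} β ≤_{A,B} γ, one has ϱ_{A,B}(α, β) ≤ ϱ_{A,B}(α, γ) and ϱ_{A,B}(β, γ) ≤ ϱ_{A,B}(α, γ). -/
/-- An aggregation function on `[0,1]²`. -/
structure IsAggregation (A : ℝ → ℝ → ℝ) : Prop where
  mapsTo : ∀ x y, x ∈ Set.Icc (0 : ℝ) 1 → y ∈ Set.Icc (0 : ℝ) 1 →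
    A x y ∈ Set.Icc (0 : ℝ) 1
  mono_left : ∀ x₁ x₂ y, x₁ ∈ Set.Icc (0 : ℝ) 1 → x₂ ∈ Set.Icc (0 : ℝ) 1 →
    y ∈ Set.Icc (0 : ℝ) 1 → x₁ ≤ x₂ → A x₁ y ≤ A x₂ y
  mono_right : ∀ x y₁ y₂, x ∈ Set.Icc (0 : ℝ) 1 → y₁ ∈ Set.Icc (0 : ℝ) 1 →
    y₂ ∈ Set.Icc (0 : ℝ) 1 → y₁ ≤ y₂ → A x y₁ ≤ A x y₂
  zero : A 0 0 = 0
  one : A 1 1 = 1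

/-- `Ā(α) = A(μ_α, 1 - ν_α)`. -/
def aggBar (A : ℝ → ℝ → ℝ) (p : ℝ × ℝ) : ℝ := A p.1 (1 - p.2)

/-- The order `≤_{A,B}` on IFVs. -/
def abLE (A B : ℝ → ℝ → ℝ) (a b : ℝ × ℝ) : Prop :=
  aggBar A a < aggBar A b ∨ (aggBar A a = aggBar A b ∧ aggBar B a ≤ aggBar B b)

/-- The distance measure `ϱ_{A,B}`. -/
noncomputable def vrhoAB (A B : ℝ → ℝ → ℝ) (a b : ℝ × ℝ) : ℝ :=
  if aggBar A a ≠ aggBar A b then (1 + |aggBar A a - aggBar A b|) / 2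
  else |aggBar B a - aggBar B b| / 2

/-!
Since `B̄` takes values in `[0,1]`, `ϱ_{A,B}(α, β) ≤ 1/2` when `Ā(α) = Ā(β)` and
`ϱ_{A,B}(α, β) > 1/2` otherwise. Along a chain `α ≤ β ≤ γ` the `Ā`-scores increase weakly, so
either both compared pairs fall in the same regime, where `ϱ` is an increasing function of a
distance between monotone scores, or the threshold `1/2` separates them.
-/

theorem abs_sub_le_abs_sub_of_le_of_le {G : Type*} [AddCommGroup G] [LinearOrder G]
    [IsOrderedAddMonoid G] {x y z : G} (hxy : x ≤ y) (hyz : y ≤ z) :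
    |x - y| ≤ |x - z| ∧ |y - z| ≤ |x - z| := by
  rw [abs_sub_comm x y, abs_sub_comm x z, abs_sub_comm y z,
    abs_of_nonneg (sub_nonneg.2 hxy), abs_of_nonneg (sub_nonneg.2 hyz),
    abs_of_nonneg (sub_nonneg.2 (hxy.trans hyz))]
  exact ⟨sub_le_sub_right hyz x, sub_le_sub_left hxy z⟩

theorem aggBar_mem_Icc {A : ℝ → ℝ → ℝ} (hA : IsAggregation A) {p : ℝ × ℝ} (hp : p ∈ Itilde) :
    aggBar A p ∈ Set.Icc (0 : ℝ) 1 :=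
  hA.mapsTo _ _ ⟨hp.1, hp.2.1⟩ ⟨by linarith [hp.2.2.2.1], by linarith [hp.2.2.1]⟩

section

variable {A B : ℝ → ℝ → ℝ} {a b : ℝ × ℝ}

theorem abLE.aggBar_le (h : abLE A B a b) : aggBar A a ≤ aggBar A b :=
  h.elim le_of_lt fun h => h.1.le

theorem abLE.aggBar_le_of_eq (h : abLE A B a b) (he : aggBar A a = aggBar A b) :
    aggBar B a ≤ aggBar B b :=
  h.elim (fun h => absurd he h.ne) And.right

theorem vrhoAB_of_ne (h : aggBar A a ≠ aggBar A b) :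
    vrhoAB A B a b = (1 + |aggBar A a - aggBar A b|) / 2 :=
  if_pos h

theorem vrhoAB_of_eq (h : aggBar A a = aggBar A b) :
    vrhoAB A B a b = |aggBar B a - aggBar B b| / 2 :=
  if_neg (not_not.2 h)

theorem one_half_lt_vrhoAB (h : aggBar A a ≠ aggBar A b) : 1 / 2 < vrhoAB A B a b := by
  rw [vrhoAB_of_ne h]
  have := abs_pos.2 (sub_ne_zero.2 h)
  linarith

theorem vrhoAB_le_one_half (hB : IsAggregation B) (ha : a ∈ Itilde) (hb : b ∈ Itilde)
    (h : aggBar A a = aggBar A b) : vrhoAB A B a b ≤ 1 / 2 := by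
  rw [vrhoAB_of_eq h]
  obtain ⟨ha₀, ha₁⟩ := aggBar_mem_Icc hB ha
  obtain ⟨hb₀, hb₁⟩ := aggBar_mem_Icc hB hb
  linarith [abs_sub_le_of_nonneg_of_le ha₀ ha₁ hb₀ hb₁]

end

theorem vrhoAB_admissible_general (A B : ℝ → ℝ → ℝ)
    (hB : IsAggregation B)
    (a b c : ℝ × ℝ) (ha : a ∈ Itilde) (hb : b ∈ Itilde) (hc : c ∈ Itilde)
    (hab : abLE A B a b) (hbc : abLE A B b c) :
    vrhoAB A B a b ≤ vrhoAB A B a c ∧ vrhoAB A B b c ≤ vrhoAB A B a c := by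
  rcases hab.aggBar_le.eq_or_lt with h₁ | h₁ <;> rcases hbc.aggBar_le.eq_or_lt with h₂ | h₂
  · rw [vrhoAB_of_eq h₁, vrhoAB_of_eq h₂, vrhoAB_of_eq (h₁.trans h₂)]
    obtain ⟨h, h'⟩ :=
      abs_sub_le_abs_sub_of_le_of_le (hab.aggBar_le_of_eq h₁) (hbc.aggBar_le_of_eq h₂)
    constructor <;> linarith
  · have h₃ : aggBar A a ≠ aggBar A c := (h₁ ▸ h₂).ne
    refine ⟨(vrhoAB_le_one_half hB ha hb h₁).trans (one_half_lt_vrhoAB h₃).le, ?_⟩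
    rw [vrhoAB_of_ne h₂.ne, vrhoAB_of_ne h₃, h₁]
  · have h₃ : aggBar A a ≠ aggBar A c := (h₂ ▸ h₁).ne
    refine ⟨?_, (vrhoAB_le_one_half hB hb hc h₂).trans (one_half_lt_vrhoAB h₃).le⟩
    rw [vrhoAB_of_ne h₁.ne, vrhoAB_of_ne h₃, h₂]
  · rw [vrhoAB_of_ne h₁.ne, vrhoAB_of_ne h₂.ne, vrhoAB_of_ne (h₁.trans h₂).ne]
    obtain ⟨h, h'⟩ := abs_sub_le_abs_sub_of_le_of_le h₁.le h₂.le
    constructor <;> linarith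

/-- For a separating pair `(A, B)` of continuous aggregation functions,
`ϱ_{A,B}` is admissible with the linear order `≤_{A,B}`. -/
theorem vrhoAB_admissible (A B : ℝ → ℝ → ℝ)
    (hA : IsAggregation A) (hB : IsAggregation B)
    (hAc : ContinuousOn (fun p : ℝ × ℝ => A p.1 p.2)
      (Set.Icc (0 : ℝ) 1 ×ˢ Set.Icc (0 : ℝ) 1))
    (hBc : ContinuousOn (fun p : ℝ × ℝ => B p.1 p.2)
      (Set.Icc (0 : ℝ) 1 ×ˢ Set.Icc (0 : ℝ) 1))
    (hsep : ∀ x₁ y₁ x₂ y₂, x₁ ∈ Set.Icc (0 : ℝ) 1 → y₁ ∈ Set.Icc (0 : ℝ) 1 →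
      x₂ ∈ Set.Icc (0 : ℝ) 1 → y₂ ∈ Set.Icc (0 : ℝ) 1 →
      A x₁ y₁ = A x₂ y₂ → B x₁ y₁ = B x₂ y₂ → x₁ = x₂ ∧ y₁ = y₂)
    (a b c : ℝ × ℝ) (ha : a ∈ Itilde) (hb : b ∈ Itilde) (hc : c ∈ Itilde)
    (hab : abLE A B a b) (hbc : abLE A B b c) :
    vrhoAB A B a b ≤ vrhoAB A B a c ∧ vrhoAB A B b c ≤ vrhoAB A B a c :=
  vrhoAB_admissible_general A B hB a b c ha hb hc hab hbc
end

section
/- (Monotonicity of the proposed TOPSIS under ≤_ZX.) Fix λ ≥ 1, n ≥ 1, m ≥ 1, a normalized intuitionistic fuzzy decision matrix r̄ and weights ω as in the context, and let S⁺_i, S⁻_i, C_i be built from ϱ̃^(λ). If there exist indices i₁, i₂ ∈ {1, …, n} such that r̄_{i₁ j} ≤_ZX r̄_{i₂ j} for all j ∈ {1, …, m}, then C_{i₁} ≤ C_{i₂}. -/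
open Finset

/-- The Zhang–Xu linear order `≤_ZX`. -/
noncomputable def zxLE (a b : ℝ × ℝ) : Prop :=
  Lfun a < Lfun b ∨ (Lfun a = Lfun b ∧ accuracy a ≤ accuracy b)

/-- The positive ideal-point component for attribute `j`. -/
noncomputable def idealPlus {n m : ℕ} (hn : 0 < n)
    (r : Fin n → Fin m → ℝ × ℝ) (j : Fin m) : ℝ × ℝ :=
  have hne : (univ : Finset (Fin n)).Nonempty := ⟨⟨0, hn⟩, mem_univ _⟩
  (univ.sup' hne fun i => (r i j).1, univ.inf' hne fun i => (r i j).2)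

/-- The negative ideal-point component for attribute `j`. -/
noncomputable def idealMinus {n m : ℕ} (hn : 0 < n)
    (r : Fin n → Fin m → ℝ × ℝ) (j : Fin m) : ℝ × ℝ :=
  have hne : (univ : Finset (Fin n)).Nonempty := ⟨⟨0, hn⟩, mem_univ _⟩
  (univ.inf' hne fun i => (r i j).1, univ.sup' hne fun i => (r i j).2)

/-- Weighted similarity to the positive ideal-point, built from `ϱ̃^(λ)`. -/
noncomputable def SplusT (l : ℝ) {n m : ℕ} (hn : 0 < n)
    (r : Fin n → Fin m → ℝ × ℝ) (w : Fin m → ℝ) (i : Fin n) : ℝ :=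
  1 - ∑ j, w j * vrhoT l (r i j) (idealPlus hn r j)

/-- Weighted similarity to the negative ideal-point, built from `ϱ̃^(λ)`. -/
noncomputable def SminusT (l : ℝ) {n m : ℕ} (hn : 0 < n)
    (r : Fin n → Fin m → ℝ × ℝ) (w : Fin m → ℝ) (i : Fin n) : ℝ :=
  1 - ∑ j, w j * vrhoT l (r i j) (idealMinus hn r j)

/-- The relative closeness degree of alternative `i`. -/
noncomputable def closenessT (l : ℝ) {n m : ℕ} (hn : 0 < n)
    (r : Fin n → Fin m → ℝ × ℝ) (w : Fin m → ℝ) (i : Fin n) : ℝ :=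
  SplusT l hn r w i / (SplusT l hn r w i + SminusT l hn r w i)

lemma denom_pos {p : ℝ × ℝ} (hp : p ∈ Itilde) : 0 < (1 - p.1) + (1 - p.2) := by
  obtain ⟨h1, h2, h3, h4, h5⟩ := hp; linarith

lemma Lfun_nonneg {p : ℝ × ℝ} (hp : p ∈ Itilde) : 0 ≤ Lfun p := by
  obtain ⟨h1, h2, h3, h4, h5⟩ := hp
  exact div_nonneg (by linarith) (by linarith)

lemma Lfun_le_one {p : ℝ × ℝ} (hp : p ∈ Itilde) : Lfun p ≤ 1 := by
  obtain ⟨h1, h2, h3, h4, h5⟩ := hp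
  rw [Lfun, div_le_one (by linarith)]; linarith

lemma accuracy_nonneg {p : ℝ × ℝ} (hp : p ∈ Itilde) : 0 ≤ accuracy p := by
  obtain ⟨h1, h2, h3, h4, h5⟩ := hp; unfold accuracy; linarith

lemma accuracy_le_one {p : ℝ × ℝ} (hp : p ∈ Itilde) : accuracy p ≤ 1 := by
  obtain ⟨h1, h2, h3, h4, h5⟩ := hp; unfold accuracy; linarith

lemma accuracy_abs_le {p q : ℝ × ℝ} (hp : p ∈ Itilde) (hq : q ∈ Itilde) :
    |accuracy p - accuracy q| ≤ 1 := by
  rw [abs_le]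
  constructor
  · have := accuracy_nonneg hp; have := accuracy_le_one hq; linarith
  · have := accuracy_le_one hp; have := accuracy_nonneg hq; linarith

lemma Lfun_mono {a b : ℝ × ℝ} (ha : a ∈ Itilde) (hb : b ∈ Itilde)
    (h1 : a.1 ≤ b.1) (h2 : b.2 ≤ a.2) : Lfun a ≤ Lfun b := by
  have da := denom_pos ha; have db := denom_pos hb
  obtain ⟨a1, a2, a3, a4, a5⟩ := ha; obtain ⟨b1, b2, b3, b4, b5⟩ := hb
  rw [Lfun, Lfun, div_le_div_iff₀ da db]
  nlinarith [mul_le_mul (show 1 - a.2 ≤ 1 - b.2 by linarith)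
    (show 1 - b.1 ≤ 1 - a.1 by linarith) (by linarith : (0:ℝ) ≤ 1 - b.1)
    (by linarith : (0:ℝ) ≤ 1 - b.2)]

lemma Lfun_rigid {a b : ℝ × ℝ} (ha : a ∈ Itilde) (hb : b ∈ Itilde)
    (h1 : a.1 ≤ b.1) (h2 : b.2 ≤ a.2) (hL : Lfun a = Lfun b) :
    accuracy a = accuracy b := by
  have da := denom_pos ha; have db := denom_pos hb
  have key : (1 - a.2) * (1 - b.1) = (1 - b.2) * (1 - a.1) := by
    rw [Lfun, Lfun, div_eq_div_iff (ne_of_gt da) (ne_of_gt db)] at hL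
    nlinarith [hL]
  obtain ⟨a1, a2, a3, a4, a5⟩ := ha; obtain ⟨b1, b2, b3, b4, b5⟩ := hb
  unfold accuracy
  rcases eq_or_lt_of_le a4 with hy0 | hy0
  · -- a.2 = 1, so a.1 = 0, a = (0,1)
    have ha1 : a.1 = 0 := by linarith
    have hb2' : 1 - b.2 = 0 := by nlinarith
    have : b.1 = 0 := by nlinarith
    linarith
  · -- 0 < 1 - a.2
    rcases eq_or_lt_of_le a2 with hx0 | hx0
    · -- a.1 = 1, so a.2 = 0, b.1 = 1, b.2 = 0
      have : b.1 = 1 := by linarith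
      have : a.2 = 0 := by linarith
      have : b.2 = 0 := by linarith
      linarith
    · -- 0 < 1 - a.1
      have hxy : (1 - b.2) * (1 - a.1) ≥ (1 - a.2) * (1 - a.1) := by nlinarith
      -- key gives (1-a.2)(1-b.1) = (1-b.2)(1-a.1) ≥ (1-a.2)(1-a.1), so 1-b.1 ≥ 1-a.1
      have hb1 : b.1 = a.1 := by nlinarith
      have hb2 : b.2 = a.2 := by nlinarith
      linarith

lemma vrho_nonneg (l : ℝ) (hl : 1 ≤ l) (a b : ℝ × ℝ) : 0 ≤ vrhoT l a b := by
  have h1 : (0:ℝ) ≤ 1 + l := by linarith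
  unfold vrhoT; split_ifs
  · exact div_nonneg (by nlinarith [abs_nonneg (Lfun a - Lfun b)]) h1
  · exact div_nonneg (abs_nonneg _) h1

lemma vrho_le_one (l : ℝ) (hl : 1 ≤ l) (a b : ℝ × ℝ)
    (hL : |Lfun a - Lfun b| ≤ 1) (hh : |accuracy a - accuracy b| ≤ 1) :
    vrhoT l a b ≤ 1 := by
  have h0 : (0:ℝ) < 1 + l := by linarith
  unfold vrhoT; split_ifs
  · rw [div_le_one h0]; nlinarith [abs_nonneg (Lfun a - Lfun b)]
  · rw [div_le_one h0]; linarith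

lemma vrho_anti_plus (l : ℝ) (hl : 1 ≤ l) (a b P : ℝ × ℝ)
    (hab : Lfun a ≤ Lfun b) (hbP : Lfun b ≤ Lfun P)
    (heq : Lfun b = Lfun P → accuracy b = accuracy P) :
    vrhoT l b P ≤ vrhoT l a P := by
  have h0 : (0:ℝ) < 1 + l := by linarith
  rcases eq_or_lt_of_le hbP with h | h
  · have hz : vrhoT l b P = 0 := by
      rw [vrhoT, if_neg (not_not_intro h), heq h, sub_self, abs_zero, zero_div]
    rw [hz]; exact vrho_nonneg l hl a P
  · have haP : Lfun a < Lfun P := lt_of_le_of_lt hab h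
    rw [vrhoT, vrhoT, if_pos (ne_of_lt h), if_pos (ne_of_lt haP),
      abs_of_neg (by linarith : Lfun b - Lfun P < 0),
      abs_of_neg (by linarith : Lfun a - Lfun P < 0)]
    gcongr

lemma vrho_anti_minus (l : ℝ) (hl : 1 ≤ l) (a b N : ℝ × ℝ)
    (hNa : Lfun N ≤ Lfun a) (hab : Lfun a ≤ Lfun b)
    (heq : Lfun N = Lfun a → accuracy N = accuracy a) :
    vrhoT l a N ≤ vrhoT l b N := by
  have h0 : (0:ℝ) < 1 + l := by linarith
  rcases eq_or_lt_of_le hNa with h | h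
  · have hz : vrhoT l a N = 0 := by
      rw [vrhoT, if_neg (not_not_intro h.symm)]
      rw [heq h, sub_self, abs_zero, zero_div]
    rw [hz]; exact vrho_nonneg l hl b N
  · have hbN : Lfun N < Lfun b := lt_of_lt_of_le h hab
    rw [vrhoT, vrhoT, if_pos (ne_of_gt h), if_pos (ne_of_gt hbN),
      abs_of_pos (by linarith : 0 < Lfun a - Lfun N),
      abs_of_pos (by linarith : 0 < Lfun b - Lfun N)]
    gcongr

lemma vrho_sum_bound (l : ℝ) (hl : 1 ≤ l) (a P N : ℝ × ℝ)
    (h1 : Lfun N ≤ Lfun a) (h2 : Lfun a ≤ Lfun P)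
    (hP1 : Lfun P ≤ 1) (hN0 : 0 ≤ Lfun N)
    (ha : |accuracy a - accuracy P| ≤ 1) (hb : |accuracy a - accuracy N| ≤ 1) :
    vrhoT l a P + vrhoT l a N ≤ 3 / 2 := by
  have h0 : (0:ℝ) < 1 + l := by linarith
  unfold vrhoT
  split_ifs with hp hq hq
  · rw [abs_of_nonpos (by linarith : Lfun a - Lfun P ≤ 0),
      abs_of_nonneg (by linarith : 0 ≤ Lfun a - Lfun N),
      ← add_div, div_le_iff₀ h0]
    nlinarith
  · rw [abs_of_nonpos (by linarith : Lfun a - Lfun P ≤ 0),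
      ← add_div, div_le_iff₀ h0]
    nlinarith
  · rw [abs_of_nonneg (by linarith : 0 ≤ Lfun a - Lfun N),
      ← add_div, div_le_iff₀ h0]
    nlinarith
  · rw [← add_div, div_le_iff₀ h0]
    nlinarith

lemma frac_mono {a1 a2 b1 b2 : ℝ} (ha1 : 0 ≤ a1) (hb2 : 0 ≤ b2)
    (ha : a1 ≤ a2) (hb : b2 ≤ b1) (h1 : 0 < a1 + b1) (h2 : 0 < a2 + b2) :
    a1 / (a1 + b1) ≤ a2 / (a2 + b2) := by
  rw [div_le_div_iff₀ h1 h2]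
  nlinarith [mul_nonneg (by linarith : (0:ℝ) ≤ a2 - a1) hb2,
    mul_nonneg (by linarith : (0:ℝ) ≤ a2) (by linarith : (0:ℝ) ≤ b1 - b2)]

lemma idealPlus_fst {n m : ℕ} (hn : 0 < n) (r : Fin n → Fin m → ℝ × ℝ) (j : Fin m) :
    (idealPlus hn r j).1 = univ.sup' ⟨⟨0, hn⟩, mem_univ _⟩ (fun i => (r i j).1) := rfl

lemma idealPlus_snd {n m : ℕ} (hn : 0 < n) (r : Fin n → Fin m → ℝ × ℝ) (j : Fin m) :
    (idealPlus hn r j).2 = univ.inf' ⟨⟨0, hn⟩, mem_univ _⟩ (fun i => (r i j).2) := rfl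

lemma idealMinus_fst {n m : ℕ} (hn : 0 < n) (r : Fin n → Fin m → ℝ × ℝ) (j : Fin m) :
    (idealMinus hn r j).1 = univ.inf' ⟨⟨0, hn⟩, mem_univ _⟩ (fun i => (r i j).1) := rfl

lemma idealMinus_snd {n m : ℕ} (hn : 0 < n) (r : Fin n → Fin m → ℝ × ℝ) (j : Fin m) :
    (idealMinus hn r j).2 = univ.sup' ⟨⟨0, hn⟩, mem_univ _⟩ (fun i => (r i j).2) := rfl

lemma idealPlus_dom {n m : ℕ} (hn : 0 < n) (r : Fin n → Fin m → ℝ × ℝ)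
    (j : Fin m) (i : Fin n) :
    (r i j).1 ≤ (idealPlus hn r j).1 ∧ (idealPlus hn r j).2 ≤ (r i j).2 := by
  rw [idealPlus_fst, idealPlus_snd]
  exact ⟨le_sup' (fun i => (r i j).1) (mem_univ i), inf'_le (fun i => (r i j).2) (mem_univ i)⟩

lemma idealMinus_dom {n m : ℕ} (hn : 0 < n) (r : Fin n → Fin m → ℝ × ℝ)
    (j : Fin m) (i : Fin n) :
    (idealMinus hn r j).1 ≤ (r i j).1 ∧ (r i j).2 ≤ (idealMinus hn r j).2 := by
  rw [idealMinus_fst, idealMinus_snd]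
  exact ⟨inf'_le (fun i => (r i j).1) (mem_univ i), le_sup' (fun i => (r i j).2) (mem_univ i)⟩

lemma idealPlus_mem {n m : ℕ} (hn : 0 < n) (r : Fin n → Fin m → ℝ × ℝ)
    (hr : ∀ i j, r i j ∈ Itilde) (j : Fin m) : idealPlus hn r j ∈ Itilde := by
  have hne : (univ : Finset (Fin n)).Nonempty := ⟨⟨0, hn⟩, mem_univ _⟩
  obtain ⟨i0, -, hi0⟩ := exists_mem_eq_sup' hne (fun i => (r i j).1)
  have hi0' : (univ.sup' ⟨⟨0, hn⟩, mem_univ _⟩ (fun i => (r i j).1)) = (r i0 j).1 := hi0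
  refine ⟨?_, ?_, ?_, ?_, ?_⟩ <;>
    simp only [Itilde, idealPlus_fst, idealPlus_snd]
  · rw [hi0']; exact (hr i0 j).1
  · rw [hi0']; exact (hr i0 j).2.1
  · exact le_inf' _ _ fun i _ => (hr i j).2.2.1
  · exact le_trans (inf'_le _ (mem_univ i0)) (hr i0 j).2.2.2.1
  · rw [hi0']
    exact le_trans (add_le_add_right (inf'_le _ (mem_univ i0)) _) (hr i0 j).2.2.2.2

lemma idealMinus_mem {n m : ℕ} (hn : 0 < n) (r : Fin n → Fin m → ℝ × ℝ)
    (hr : ∀ i j, r i j ∈ Itilde) (j : Fin m) : idealMinus hn r j ∈ Itilde := by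
  have hne : (univ : Finset (Fin n)).Nonempty := ⟨⟨0, hn⟩, mem_univ _⟩
  obtain ⟨i0, -, hi0⟩ := exists_mem_eq_sup' hne (fun i => (r i j).2)
  have hi0' : (univ.sup' ⟨⟨0, hn⟩, mem_univ _⟩ (fun i => (r i j).2)) = (r i0 j).2 := hi0
  refine ⟨?_, ?_, ?_, ?_, ?_⟩ <;>
    simp only [Itilde, idealMinus_fst, idealMinus_snd]
  · exact le_inf' _ _ fun i _ => (hr i j).1
  · exact le_trans (inf'_le _ (mem_univ i0)) (hr i0 j).2.1
  · rw [hi0']; exact (hr i0 j).2.2.1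
  · rw [hi0']; exact (hr i0 j).2.2.2.1
  · rw [hi0']
    exact le_trans (add_le_add_left (inf'_le _ (mem_univ i0)) _) (hr i0 j).2.2.2.2

/-- Monotonicity of the proposed TOPSIS under `≤_ZX`: if `r̄_{i₁ j} ≤_ZX r̄_{i₂ j}`
for all attributes `j`, then `C_{i₁} ≤ C_{i₂}`. -/
theorem topsis_monotone_zx (l : ℝ) (hl : 1 ≤ l) (n m : ℕ) (hn : 0 < n) (hm : 0 < m)
    (r : Fin n → Fin m → ℝ × ℝ) (hr : ∀ i j, r i j ∈ Itilde)
    (w : Fin m → ℝ) (hw0 : ∀ j, 0 < w j) (hw1 : ∀ j, w j ≤ 1)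
    (hwsum : ∑ j, w j = 1) (i₁ i₂ : Fin n)
    (hle : ∀ j, zxLE (r i₁ j) (r i₂ j)) :
    closenessT l hn r w i₁ ≤ closenessT l hn r w i₂ := by
  -- basic facts per attribute
  have hPmem : ∀ j, idealPlus hn r j ∈ Itilde := idealPlus_mem hn r hr
  have hNmem : ∀ j, idealMinus hn r j ∈ Itilde := idealMinus_mem hn r hr
  have hLab : ∀ j, Lfun (r i₁ j) ≤ Lfun (r i₂ j) := by
    intro j; rcases hle j with h | ⟨h, -⟩
    · exact le_of_lt h
    · exact le_of_eq h
  have hLP : ∀ (i : Fin n) j, Lfun (r i j) ≤ Lfun (idealPlus hn r j) := fun i j =>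
    Lfun_mono (hr i j) (hPmem j) (idealPlus_dom hn r j i).1 (idealPlus_dom hn r j i).2
  have hLN : ∀ (i : Fin n) j, Lfun (idealMinus hn r j) ≤ Lfun (r i j) := fun i j =>
    Lfun_mono (hNmem j) (hr i j) (idealMinus_dom hn r j i).1 (idealMinus_dom hn r j i).2
  -- pointwise comparisons of distances
  have key1 : ∀ j, vrhoT l (r i₂ j) (idealPlus hn r j) ≤ vrhoT l (r i₁ j) (idealPlus hn r j) :=
    fun j => vrho_anti_plus l hl _ _ _ (hLab j) (hLP i₂ j)
      (fun h => Lfun_rigid (hr i₂ j) (hPmem j) (idealPlus_dom hn r j i₂).1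
        (idealPlus_dom hn r j i₂).2 h)
  have key2 : ∀ j, vrhoT l (r i₁ j) (idealMinus hn r j) ≤ vrhoT l (r i₂ j) (idealMinus hn r j) :=
    fun j => vrho_anti_minus l hl _ _ _ (hLN i₁ j) (hLab j)
      (fun h => Lfun_rigid (hNmem j) (hr i₁ j) (idealMinus_dom hn r j i₁).1
        (idealMinus_dom hn r j i₁).2 h)
  -- S comparisons
  have hS1 : SplusT l hn r w i₁ ≤ SplusT l hn r w i₂ := by
    unfold SplusT
    have := Finset.sum_le_sum (s := univ)
      (f := fun j => w j * vrhoT l (r i₂ j) (idealPlus hn r j))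
      (g := fun j => w j * vrhoT l (r i₁ j) (idealPlus hn r j))
      (fun j _ => mul_le_mul_of_nonneg_left (key1 j) (le_of_lt (hw0 j)))
    linarith
  have hS2 : SminusT l hn r w i₂ ≤ SminusT l hn r w i₁ := by
    unfold SminusT
    have := Finset.sum_le_sum (s := univ)
      (f := fun j => w j * vrhoT l (r i₁ j) (idealMinus hn r j))
      (g := fun j => w j * vrhoT l (r i₂ j) (idealMinus hn r j))
      (fun j _ => mul_le_mul_of_nonneg_left (key2 j) (le_of_lt (hw0 j)))
    linarith
  -- nonnegativity of S
  have habsL : ∀ (a b : ℝ × ℝ), a ∈ Itilde → b ∈ Itilde → |Lfun a - Lfun b| ≤ 1 := by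
    intro a b ha hb
    rw [abs_le]
    have := Lfun_nonneg ha; have := Lfun_le_one ha
    have := Lfun_nonneg hb; have := Lfun_le_one hb
    constructor <;> linarith
  have hSplus_nonneg : ∀ i, 0 ≤ SplusT l hn r w i := by
    intro i
    unfold SplusT
    have hsum : ∑ j, w j * vrhoT l (r i j) (idealPlus hn r j) ≤ ∑ j, w j := by
      apply Finset.sum_le_sum
      intro j _
      nth_rewrite 2 [show w j = w j * 1 by ring]
      exact mul_le_mul_of_nonneg_left
        (vrho_le_one l hl _ _ (habsL _ _ (hr i j) (hPmem j))
          (accuracy_abs_le (hr i j) (hPmem j))) (le_of_lt (hw0 j))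
    rw [hwsum] at hsum
    linarith
  have hSminus_nonneg : ∀ i, 0 ≤ SminusT l hn r w i := by
    intro i
    unfold SminusT
    have hsum : ∑ j, w j * vrhoT l (r i j) (idealMinus hn r j) ≤ ∑ j, w j := by
      apply Finset.sum_le_sum
      intro j _
      nth_rewrite 2 [show w j = w j * 1 by ring]
      exact mul_le_mul_of_nonneg_left
        (vrho_le_one l hl _ _ (habsL _ _ (hr i j) (hNmem j))
          (accuracy_abs_le (hr i j) (hNmem j))) (le_of_lt (hw0 j))
    rw [hwsum] at hsum
    linarith
  -- positivity of S⁺ + S⁻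
  have hSpos : ∀ i, 0 < SplusT l hn r w i + SminusT l hn r w i := by
    intro i
    unfold SplusT SminusT
    have hsum : ∑ j, w j * vrhoT l (r i j) (idealPlus hn r j)
        + ∑ j, w j * vrhoT l (r i j) (idealMinus hn r j) ≤ 3 / 2 := by
      rw [← Finset.sum_add_distrib]
      calc ∑ j, (w j * vrhoT l (r i j) (idealPlus hn r j)
              + w j * vrhoT l (r i j) (idealMinus hn r j))
          ≤ ∑ j, w j * (3 / 2) := by
            apply Finset.sum_le_sum
            intro j _
            rw [← mul_add]
            exact mul_le_mul_of_nonneg_left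
              (vrho_sum_bound l hl _ _ _ (hLN i j) (hLP i j)
                (Lfun_le_one (hPmem j)) (Lfun_nonneg (hNmem j))
                (accuracy_abs_le (hr i j) (hPmem j))
                (accuracy_abs_le (hr i j) (hNmem j))) (le_of_lt (hw0 j))
        _ = 3 / 2 := by rw [← Finset.sum_mul, hwsum, one_mul]
    linarith
  exact frac_mono (hSplus_nonneg i₁) (hSminus_nonneg i₂) hS1 hS2 (hSpos i₁) (hSpos i₂)
end
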